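/- arXiv:0803.3699 — 2 statements merged into one kernel-verified Lean document; each statement's English description precedes it below -/
import Mathlib

section
/- Proposition 2, case 1 (entanglement of the output): for all a, b : ZMod 2, the state CNOT (h a ⊗ e b) is entangled, i.e. there do not exist vectors u, v : H with CNOT (h a ⊗ e b) = u ⊗ v. -/
noncomputable section
open scoped TensorProduct

abbrev H : Type := EuclideanSpace ℂ (Fin 2)

/-- computational (rectilinear, `|+⟩`) basis states -/
def e (x : ZMod 2) : H := EuclideanSpace.single ⟨x.val, x.val_lt⟩ 1

/-- diagonal (Hadamard, `|×⟩`) basis states -/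
def h (x : ZMod 2) : H := (Real.sqrt 2 : ℂ)⁻¹ • (e 0 + ((-1 : ℂ)) ^ x.val • e 1)

/-!
The coefficients `(f ⊗ g) t` of a product tensor `t = u ⊗ v` against dual functionals form the
rank-one array `f u * g v`, so all its 2 × 2 minors vanish. In the computational basis,
`CNOT (h a ⊗ e b) = (e 0 ⊗ e b ± e 1 ⊗ e (1 + b)) / √2` has nonzero coefficients at `(0, b)` and
`(1, 1 + b)` and zero coefficients at `(0, 1 + b)` and `(1, b)`, since `b ≠ 1 + b`; so its minor
is `± 1/2 ≠ 0`.
-/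

open Module TensorProduct

theorem dualDistrib_tmul_mul_eq {R M N : Type*} [CommRing R] [AddCommGroup M] [Module R M]
    [AddCommGroup N] [Module R N] (f f' : Dual R M) (g g' : Dual R N) (m : M) (n : N) :
    dualDistrib R M N (f ⊗ₜ g) (m ⊗ₜ n) * dualDistrib R M N (f' ⊗ₜ g') (m ⊗ₜ n) =
      dualDistrib R M N (f ⊗ₜ g') (m ⊗ₜ n) * dualDistrib R M N (f' ⊗ₜ g) (m ⊗ₜ n) := by
  simp only [dualDistrib_apply]
  ring

def coord (x : ZMod 2) : Dual ℂ H := (EuclideanSpace.proj (⟨x.val, x.val_lt⟩ : Fin 2)).toLinearMap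

theorem coord_e (x y : ZMod 2) : coord x (e y) = if x = y then 1 else 0 := by
  simp [coord, e, Fin.ext_iff, (ZMod.val_injective 2).eq_iff]

theorem cnot_h_tmul_e (CNOT : (H ⊗[ℂ] H) →ₗ[ℂ] (H ⊗[ℂ] H))
    (hCNOT : ∀ a b : ZMod 2, CNOT (e a ⊗ₜ[ℂ] e b) = e a ⊗ₜ[ℂ] e (a + b)) (a b : ZMod 2) :
    CNOT (h a ⊗ₜ[ℂ] e b) =
      (Real.sqrt 2 : ℂ)⁻¹ • (e 0 ⊗ₜ e b + (-1 : ℂ) ^ a.val • e 1 ⊗ₜ e (1 + b)) := by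
  simp only [h, ← smul_tmul', map_smul, add_tmul, map_add, hCNOT, zero_add]

/-- Proposition 2, case 1 (entanglement of the output): for the controlled-NOT
gate, determined on the computational product basis by
`CNOT (e a ⊗ e b) = e a ⊗ e (a + b)`, the state `CNOT (h a ⊗ e b)` is
entangled: it is not of the form `u ⊗ v`. -/
theorem cnot_mixed_entangled (CNOT : (H ⊗[ℂ] H) →ₗ[ℂ] (H ⊗[ℂ] H))
    (hCNOT : ∀ a b : ZMod 2, CNOT (e a ⊗ₜ[ℂ] e b) = e a ⊗ₜ[ℂ] e (a + b)) :
    ∀ a b : ZMod 2, ¬ ∃ (u v : H), CNOT (h a ⊗ₜ[ℂ] e b) = u ⊗ₜ[ℂ] v := by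
  rintro a b ⟨u, v, huv⟩
  have hminor := dualDistrib_tmul_mul_eq (coord 0) (coord 1) (coord b) (coord (1 + b)) u v
  rw [← huv, cnot_h_tmul_e CNOT hCNOT] at hminor
  simp [coord_e, dualDistrib_apply] at hminor
end
end

section
/- Parity tracking after the relay measurement (QQTR correctness): let Ψ = (id ⊗ CNOT ⊗ id) (Φ⁺ ⊗ Φ⁺). Then for all x, c₁, c₂, y : ZMod 2, the squared modulus of ⟨e x ⊗ h c₁ ⊗ e c₂ ⊗ e y, Ψ⟩ equals 1/8 if x + y = c₂, and 0 otherwise. Hence after the relay measures qubit 2 in the diagonal basis and qubit 3 in the rectilinear basis, the rectilinear outcome c₂ equals the parity of the two endpoint qubits, the diagonal outcome is uniformly random and carries no information about the endpoints, and all compatible outcome combinations are equally likely. -/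
noncomputable section
open scoped TensorProduct

/-- Bell state `Φ⁺ = (e 0 ⊗ e 0 + e 1 ⊗ e 1) / √2` -/
def Φp : H ⊗[ℂ] H := (Real.sqrt 2 : ℂ)⁻¹ • (e 0 ⊗ₜ[ℂ] e 0 + e 1 ⊗ₜ[ℂ] e 1)

/-- the four-qubit space, qubits ordered 1,2,3,4 and grouped as `(1,(2,3)),4` -/
abbrev H4 : Type := (H ⊗[ℂ] (H ⊗[ℂ] H)) ⊗[ℂ] H

/-- the two Bell pairs `Φ⁺ ⊗ Φ⁺` (qubit pairs `(1,2)` and `(3,4)`), regrouped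
into `H4` via the canonical associators -/
def twoBells : H4 :=
  (TensorProduct.congr (TensorProduct.assoc ℂ H H H) (LinearEquiv.refl ℂ H))
    ((TensorProduct.assoc ℂ (H ⊗[ℂ] H) H H).symm (Φp ⊗ₜ[ℂ] Φp))

/-- the four-qubit operator `id ⊗ CNOT ⊗ id`, applying `CNOT` to qubits 2
(control) and 3 (target) -/
def idCNOTid (CNOT : (H ⊗[ℂ] H) →ₗ[ℂ] (H ⊗[ℂ] H)) : H4 →ₗ[ℂ] H4 :=
  TensorProduct.map (TensorProduct.map LinearMap.id CNOT) LinearMap.id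

/-- the computational basis of a single qubit -/
def bH : Module.Basis (Fin 2) ℂ H := (EuclideanSpace.basisFun (Fin 2) ℂ).toBasis

/-- the computational product basis of the four-qubit space -/
def bH4 : Module.Basis ((Fin 2 × (Fin 2 × Fin 2)) × Fin 2) ℂ H4 :=
  (bH.tensorProduct (bH.tensorProduct bH)).tensorProduct bH

/-- the inner product on `H4` induced from the Hermitian inner products on the
factors (in coordinates w.r.t. the orthonormal computational product basis) -/
def ip4 (ψ φ : H4) : ℂ :=
  ∑ p : (Fin 2 × (Fin 2 × Fin 2)) × Fin 2,
    (starRingEnd ℂ) (bH4.repr ψ p) * (bH4.repr φ p)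

/-! After the CNOT, `Ψ = ½ ∑_{a,b} e a ⊗ e a ⊗ e (a + b) ⊗ e b`: the third qubit holds the
parity of the two endpoint qubits. Pairing with `e x ⊗ h c₁ ⊗ e c₂ ⊗ e y` keeps only the term
`a = x`, `b = y`, which survives iff `x + y = c₂`, with amplitude `½ ⟪h c₁, e x⟫` of modulus
`1 / (2√2)` whatever `c₁` is. -/

open scoped InnerProductSpace

lemma bH_repr (f : H) (i : Fin 2) : bH.repr f i = f i := by
  simp [bH]

lemma ip4_tmul (u₁ u₂ u₃ u₄ v₁ v₂ v₃ v₄ : H) :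
    ip4 ((u₁ ⊗ₜ[ℂ] (u₂ ⊗ₜ[ℂ] u₃)) ⊗ₜ[ℂ] u₄) ((v₁ ⊗ₜ[ℂ] (v₂ ⊗ₜ[ℂ] v₃)) ⊗ₜ[ℂ] v₄) =
      ⟪u₁, v₁⟫_ℂ * ⟪u₂, v₂⟫_ℂ * ⟪u₃, v₃⟫_ℂ * ⟪u₄, v₄⟫_ℂ := by
  simp only [ip4, bH4, Module.Basis.tensorProduct_repr_tmul_apply, bH_repr, PiLp.inner_apply,
    RCLike.inner_apply, Fintype.sum_prod_type, Fin.sum_univ_two, map_mul, smul_eq_mul]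
  ring

lemma ip4_smul_right (ψ : H4) (c : ℂ) (φ : H4) : ip4 ψ (c • φ) = c * ip4 ψ φ := by
  simp [ip4, Finset.mul_sum, mul_left_comm]

lemma ip4_sum_right {ι : Type*} (s : Finset ι) (ψ : H4) (φ : ι → H4) :
    ip4 ψ (∑ i ∈ s, φ i) = ∑ i ∈ s, ip4 ψ (φ i) := by
  simp only [ip4, map_sum, Finsupp.coe_finsetSum, Finset.sum_apply, Finset.mul_sum]
  exact Finset.sum_comm

lemma zmod_two_eq_zero_or_one (a : ZMod 2) : a = 0 ∨ a = 1 := by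
  decide +revert

lemma inner_e_e (x a : ZMod 2) : ⟪e x, e a⟫_ℂ = if x = a then 1 else 0 := by
  simp [e, EuclideanSpace.inner_single_left, (ZMod.val_injective 2).eq_iff]

lemma inner_h_e (c a : ZMod 2) :
    ⟪h c, e a⟫_ℂ = (Real.sqrt 2 : ℂ)⁻¹ * (-1) ^ (c.val * a.val) := by
  simp only [h, inner_smul_left, inner_add_left, inner_e_e]
  rcases zmod_two_eq_zero_or_one a with rfl | rfl <;> simp [ZMod.val_one]

lemma norm_inner_h_e (c a : ZMod 2) : ‖⟪h c, e a⟫_ℂ‖ = (Real.sqrt 2)⁻¹ := by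
  simp [inner_h_e]

lemma Φp_eq_sum : Φp = (Real.sqrt 2 : ℂ)⁻¹ • ∑ a : ZMod 2, e a ⊗ₜ[ℂ] e a := by
  rw [Φp]
  rfl

lemma twoBells_eq_sum :
    twoBells = (2 : ℂ)⁻¹ • ∑ a : ZMod 2, ∑ b : ZMod 2, (e a ⊗ₜ[ℂ] (e a ⊗ₜ[ℂ] e b)) ⊗ₜ[ℂ] e b := by
  have hsqrt : (Real.sqrt 2 : ℂ)⁻¹ * (Real.sqrt 2 : ℂ)⁻¹ = 2⁻¹ := by
    rw [← mul_inv, ← Complex.ofReal_mul, Real.mul_self_sqrt zero_le_two, Complex.ofReal_ofNat]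
  simp only [twoBells, Φp_eq_sum, TensorProduct.smul_tmul_smul, hsqrt, TensorProduct.sum_tmul,
    TensorProduct.tmul_sum, map_smul, map_sum, TensorProduct.assoc_symm_tmul,
    TensorProduct.congr_tmul, TensorProduct.assoc_tmul, LinearEquiv.refl_apply]
  rw [Finset.sum_comm]

lemma idCNOTid_twoBells (CNOT : (H ⊗[ℂ] H) →ₗ[ℂ] (H ⊗[ℂ] H))
    (hCNOT : ∀ a b : ZMod 2, CNOT (e a ⊗ₜ[ℂ] e b) = e a ⊗ₜ[ℂ] e (a + b)) :
    idCNOTid CNOT twoBells =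
      (2 : ℂ)⁻¹ • ∑ a : ZMod 2, ∑ b : ZMod 2, (e a ⊗ₜ[ℂ] (e a ⊗ₜ[ℂ] e (a + b))) ⊗ₜ[ℂ] e b := by
  simp only [twoBells_eq_sum, idCNOTid, map_smul, map_sum, TensorProduct.map_tmul,
    LinearMap.id_apply, hCNOT]

lemma ip4_idCNOTid_twoBells (CNOT : (H ⊗[ℂ] H) →ₗ[ℂ] (H ⊗[ℂ] H))
    (hCNOT : ∀ a b : ZMod 2, CNOT (e a ⊗ₜ[ℂ] e b) = e a ⊗ₜ[ℂ] e (a + b)) (x c₁ c₂ y : ZMod 2) :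
    ip4 ((e x ⊗ₜ[ℂ] (h c₁ ⊗ₜ[ℂ] e c₂)) ⊗ₜ[ℂ] e y) (idCNOTid CNOT twoBells) =
      if x + y = c₂ then (2 : ℂ)⁻¹ * ⟪h c₁, e x⟫_ℂ else 0 := by
  rw [idCNOTid_twoBells CNOT hCNOT, ip4_smul_right, ip4_sum_right, Fintype.sum_eq_single x,
    ip4_sum_right, Fintype.sum_eq_single y]
  · simp only [ip4_tmul, inner_e_e, ↓reduceIte, one_mul, mul_one, mul_ite, mul_zero,
      eq_comm (a := c₂)]
  · intro b hb
    simp [ip4_tmul, inner_e_e, Ne.symm hb]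
  · intro a ha
    simp [ip4_sum_right, ip4_tmul, inner_e_e, Ne.symm ha]

/-- Parity tracking after the relay measurement (QQTR correctness): let
`Ψ = (id ⊗ CNOT ⊗ id) (Φ⁺ ⊗ Φ⁺)`.  Measuring qubit 2 in the diagonal basis
(outcome `c₁`), qubit 3 in the rectilinear basis (outcome `c₂`) and the
endpoint qubits 1, 4 in the rectilinear basis (outcomes `x`, `y`), the
probability of the outcome `(x, c₁, c₂, y)` is `1/8` if `x + y = c₂` and
`0` otherwise. -/
theorem relay_parity_tracking (CNOT : (H ⊗[ℂ] H) →ₗ[ℂ] (H ⊗[ℂ] H))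
    (hCNOT : ∀ a b : ZMod 2, CNOT (e a ⊗ₜ[ℂ] e b) = e a ⊗ₜ[ℂ] e (a + b)) :
    ∀ x c₁ c₂ y : ZMod 2,
      ‖ip4 ((e x ⊗ₜ[ℂ] (h c₁ ⊗ₜ[ℂ] e c₂)) ⊗ₜ[ℂ] e y) (idCNOTid CNOT twoBells)‖ ^ 2 =
        if x + y = c₂ then 1 / 8 else 0 := by
  intro x c₁ c₂ y
  rw [ip4_idCNOTid_twoBells CNOT hCNOT]
  split_ifs
  · rw [norm_mul, norm_inv, Complex.norm_ofNat, norm_inner_h_e, ← mul_inv, inv_pow, mul_pow,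
      Real.sq_sqrt zero_le_two]
    norm_num
  · simp
end
end
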